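/- arXiv:2407.02246 — 2 statements merged into one kernel-verified Lean document; each statement's English description precedes it below -/
import Mathlib

section
/- Fix γ ∈ (0,2) and set δ_γ := 0 for γ ∈ (0,1), δ_γ := 1/2 for γ = 1, and δ_γ := 1 for γ ∈ (1,2). For every integer m ≥ 1 and every G ∈ 𝓢 there exists C > 0 such that for all n ≥ 1, Y_1^{G,n} := ((m−1)/n²) Σ_{x,y∈ℤ} sup_{s∈[0,T]} n^γ |∇G^n_s(y/n) − ∇G^n_s(x/n)| p(y−x) ≤ C · max{ n^{γ−2}, n^{−1}, n^{γ−1−δ_γ} }. In particular, since δ_γ > γ − 1 and γ < 2, Y_1^{G,n} → 0 as n → ∞. -/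
open MeasureTheory Filter

/-- The long-range transition probability `p(z) = c_γ |z|^{-1-γ}` for `z ≠ 0`, `p(0)=0`. -/
noncomputable def transP (cγ γ : ℝ) (z : ℤ) : ℝ :=
  if z = 0 then 0 else cγ * |(z : ℝ)| ^ (-(1 + γ))

/-- The test-function space `𝓢`: `G(t,u) = ∑_{j=0}^k t^j G_j(u)` with each `G_j ∈ C_c^∞(ℝ)`. -/
def IsTestFun (G : ℝ → ℝ → ℝ) : Prop :=
  ∃ (k : ℕ) (Gj : ℕ → ℝ → ℝ),
    (∀ j, ContDiff ℝ (⊤ : ℕ∞) (Gj j) ∧ HasCompactSupport (Gj j)) ∧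
    ∀ t u, G t u = ∑ j ∈ Finset.range (k + 1), t ^ j * Gj j u

/-- The discrete gradient `∇G^n(x/n) = n (G(x/n) - G((x-1)/n))`. -/
noncomputable def gradn (n : ℕ) (H : ℝ → ℝ) (x : ℤ) : ℝ :=
  (n : ℝ) * (H ((x : ℝ) / n) - H (((x : ℝ) - 1) / n))

/-- `δ_γ = 0` for `γ ∈ (0,1)`, `δ_γ = 1/2` for `γ = 1`, `δ_γ = 1` for `γ ∈ (1,2)`. -/
noncomputable def deltaGamma (γ : ℝ) : ℝ :=
  if γ = 1 then 1 / 2 else if 1 < γ then 1 else 0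

/-- `Y_1^{G,n}`. -/
noncomputable def Y1 (cγ γ T : ℝ) (m : ℕ) (G : ℝ → ℝ → ℝ) (n : ℕ) : ℝ :=
  (((m : ℝ) - 1) / (n : ℝ) ^ 2) *
    ∑' xy : ℤ × ℤ,
      ⨆ s : Set.Icc (0 : ℝ) T,
        (n : ℝ) ^ γ * |gradn n (G (s : ℝ)) xy.2 - gradn n (G (s : ℝ)) xy.1| *
          transP cγ γ (xy.2 - xy.1)

lemma interp_min {c a b θ : ℝ} (hc : 0 ≤ c) (hca : c ≤ a) (hcb : c ≤ b)
    (hθ0 : 0 ≤ θ) (hθ1 : θ ≤ 1) : c ≤ a ^ (1 - θ) * b ^ θ := by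
  have ha : 0 ≤ a := hc.trans hca
  calc c = c ^ ((1 - θ) + θ) := by rw [show (1 - θ) + θ = 1 by ring, Real.rpow_one]
    _ = c ^ (1 - θ) * c ^ θ := Real.rpow_add' hc (by norm_num)
    _ ≤ a ^ (1 - θ) * b ^ θ :=
        mul_le_mul (Real.rpow_le_rpow hc hca (by linarith))
          (Real.rpow_le_rpow hc hcb hθ0) (Real.rpow_nonneg hc θ) (Real.rpow_nonneg ha _)

lemma abs_sub_le_of_abs_deriv_le {f : ℝ → ℝ} {C : ℝ} (hf : Differentiable ℝ f)
    (hb : ∀ u, |deriv f u| ≤ C) (a b : ℝ) : |f b - f a| ≤ C * |b - a| := by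
  have := Convex.norm_image_sub_le_of_norm_deriv_le (𝕜 := ℝ) (f := f) (s := Set.univ)
    (fun u _ => (hf u)) (fun u _ => by simpa [Real.norm_eq_abs] using hb u) convex_univ
    (Set.mem_univ a) (Set.mem_univ b)
  simpa [Real.norm_eq_abs] using this

lemma single_bounds {H : ℝ → ℝ} (h1 : ContDiff ℝ (⊤ : ℕ∞) H) (h2 : HasCompactSupport H) :
    ∃ L M : ℝ, ∃ N : ℕ, 0 ≤ L ∧ 0 ≤ M ∧ 1 ≤ N ∧
      ∀ n : ℕ, 1 ≤ n → ∀ x y : ℤ,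
        |gradn n H x| ≤ L ∧
        |gradn n H y - gradn n H x| ≤ M * |(y : ℝ) - (x : ℝ)| / n ∧
        (gradn n H x ≠ 0 → |(x : ℝ)| ≤ (N : ℝ) * n) := by
  have hinf : ContDiff ℝ (((⊤:ℕ∞)) : WithTop ℕ∞) H := h1.of_le (by simp)
  have hdiff : Differentiable ℝ H := hinf.differentiable (by norm_num)
  have hd1 : ContDiff ℝ (((⊤:ℕ∞)) : WithTop ℕ∞) (deriv H) := (contDiff_infty_iff_deriv.mp hinf).2
  have hdiff1 : Differentiable ℝ (deriv H) := hd1.differentiable (by norm_num)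
  obtain ⟨L0, hL0⟩ := (h2.deriv).exists_bound_of_continuous (hd1.continuous)
  obtain ⟨M0, hM0⟩ := (h2.deriv.deriv).exists_bound_of_continuous
    ((contDiff_infty_iff_deriv.mp hd1).2.continuous)
  obtain ⟨A, hA⟩ := h2.isBounded.subset_closedBall 0
  set L := max L0 0 with hL
  set M := max M0 0 with hM
  have hL' : ∀ u, |deriv H u| ≤ L := by
    intro u; have := hL0 u; rw [Real.norm_eq_abs] at this; exact this.trans (le_max_left _ _)
  have hM' : ∀ u, |deriv (deriv H) u| ≤ M := by
    intro u; have := hM0 u; rw [Real.norm_eq_abs] at this; exact this.trans (le_max_left _ _)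
  refine ⟨L, M, ⌈A⌉₊ + 1, le_max_right _ _, le_max_right _ _, le_add_self, ?_⟩
  intro n hn x y
  have hn0 : (0:ℝ) < n := by exact_mod_cast hn
  refine ⟨?_, ?_, ?_⟩
  · have := abs_sub_le_of_abs_deriv_le hdiff hL' (((x:ℝ) - 1) / n) ((x:ℝ) / n)
    have h3 : |(x:ℝ)/n - ((x:ℝ)-1)/n| = 1/n := by
      rw [div_sub_div_same, show (x:ℝ) - ((x:ℝ)-1) = 1 by ring]
      simp [abs_of_pos, hn0]
    rw [h3] at this
    calc |gradn n H x| = n * |H ((x:ℝ)/n) - H (((x:ℝ)-1)/n)| := by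
          rw [gradn, abs_mul, abs_of_pos hn0]
      _ ≤ n * (L * (1/n)) := by
          exact mul_le_mul_of_nonneg_left this hn0.le
      _ = L := by field_simp
  · -- Lipschitz-type bound
    set d : ℝ := ((y:ℝ) - (x:ℝ)) / n with hd
    set K : ℝ → ℝ := fun u => H (u + d) - H u with hK
    have hKdiff : Differentiable ℝ K := by
      exact (hdiff.comp (differentiable_id.add_const d)).sub hdiff
    have hKderiv : ∀ u, deriv K u = deriv H (u + d) - deriv H u := by
      intro u
      have h1' : HasDerivAt (fun u => H (u + d)) (deriv H (u + d)) u := by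
        simpa [Function.comp_def] using (hdiff (u + d)).hasDerivAt.comp u ((hasDerivAt_id u).add_const d)
      exact ((h1'.sub (hdiff u).hasDerivAt)).deriv
    have hKb : ∀ u, |deriv K u| ≤ M * |d| := by
      intro u
      rw [hKderiv u]
      have := abs_sub_le_of_abs_deriv_le hdiff1 hM' u (u + d)
      simpa using this
    have hmain := abs_sub_le_of_abs_deriv_le hKdiff hKb (((x:ℝ)-1)/n) ((x:ℝ)/n)
    have h3 : |(x:ℝ)/n - ((x:ℝ)-1)/n| = 1/n := by
      rw [div_sub_div_same, show (x:ℝ) - ((x:ℝ)-1) = 1 by ring]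
      simp [abs_of_pos, hn0]
    rw [h3] at hmain
    have hrw : gradn n H y - gradn n H x = n * (K ((x:ℝ)/n) - K (((x:ℝ)-1)/n)) := by
      simp only [gradn, hK, hd]
      have e1 : (x:ℝ)/n + ((y:ℝ) - (x:ℝ))/n = (y:ℝ)/n := by ring
      have e2 : ((x:ℝ)-1)/n + ((y:ℝ) - (x:ℝ))/n = ((y:ℝ)-1)/n := by ring
      rw [e1, e2]; ring
    rw [hrw, abs_mul, abs_of_pos hn0]
    calc (n:ℝ) * |K ((x:ℝ)/n) - K (((x:ℝ)-1)/n)| ≤ n * ((M * |d|) * (1/n)) :=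
          mul_le_mul_of_nonneg_left hmain hn0.le
      _ = M * |d| := by field_simp
      _ = M * |(y:ℝ) - (x:ℝ)| / n := by
          rw [hd, abs_div, abs_of_pos hn0]; ring
  · intro hne
    have : H ((x:ℝ)/n) ≠ H (((x:ℝ)-1)/n) := by
      intro h; apply hne; rw [gradn, h]; ring
    have hmem : (x:ℝ)/n ∈ tsupport H ∨ ((x:ℝ)-1)/n ∈ tsupport H := by
      by_contra hcon
      push_neg at hcon
      have z1 : H ((x:ℝ)/n) = 0 := image_eq_zero_of_notMem_tsupport hcon.1
      have z2 : H (((x:ℝ)-1)/n) = 0 := image_eq_zero_of_notMem_tsupport hcon.2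
      exact this (z1.trans z2.symm)
    have hAnn : A ≤ (⌈A⌉₊ : ℝ) := Nat.le_ceil A
    have hNn : (⌈A⌉₊ : ℝ) * n + 1 ≤ ((⌈A⌉₊ + 1 : ℕ) : ℝ) * n := by
      push_cast
      nlinarith [hn0, (by exact_mod_cast hn : (1:ℝ) ≤ (n:ℝ))]
    rcases hmem with hm | hm
    · have := hA hm
      rw [Metric.mem_closedBall, Real.dist_eq, sub_zero, abs_div, abs_of_pos hn0] at this
      have : |(x:ℝ)| ≤ A * n := by
        rw [div_le_iff₀ hn0] at this; linarith
      calc |(x:ℝ)| ≤ A * n := this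
        _ ≤ (⌈A⌉₊:ℝ) * n := by nlinarith
        _ ≤ ((⌈A⌉₊ + 1 : ℕ):ℝ) * n := by push_cast; nlinarith
    · have := hA hm
      rw [Metric.mem_closedBall, Real.dist_eq, sub_zero, abs_div, abs_of_pos hn0] at this
      have h4 : |(x:ℝ) - 1| ≤ A * n := by
        rw [div_le_iff₀ hn0] at this; linarith
      have h5 : |(x:ℝ)| ≤ A * n + 1 := by
        have := abs_sub_abs_le_abs_sub (x:ℝ) 1
        simp only [abs_one] at this
        linarith
      calc |(x:ℝ)| ≤ A * n + 1 := h5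
        _ ≤ (⌈A⌉₊:ℝ) * n + 1 := by nlinarith
        _ ≤ ((⌈A⌉₊ + 1 : ℕ):ℝ) * n := hNn

lemma transP_nonneg {cγ γ : ℝ} (hcγ : 0 < cγ) (z : ℤ) : 0 ≤ transP cγ γ z := by
  unfold transP
  split_ifs
  · exact le_refl 0
  · exact mul_nonneg hcγ.le (Real.rpow_nonneg (abs_nonneg _) _)

lemma summable_h {cγ γ θ : ℝ} (hcγ : 0 < cγ) (hθ : 0 ≤ θ) (hθγ : θ < γ) :
    Summable (fun z : ℤ => |(z : ℝ)| ^ θ * transP cγ γ z) := by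
  have hs : (1:ℝ) < 1 + γ - θ := by linarith
  have hbase : Summable (fun z : ℤ => 1 / |(z:ℝ) + 0| ^ (1 + γ - θ)) :=
    (Real.summable_one_div_int_add_rpow 0 (1 + γ - θ)).mpr hs
  refine Summable.of_nonneg_of_le (fun z => mul_nonneg (Real.rpow_nonneg (abs_nonneg _) _)
    (transP_nonneg hcγ z)) (fun z => ?_) (hbase.mul_left cγ)
  rcases eq_or_ne z 0 with rfl | hz
  · simp [transP]
    positivity
  · have hz0 : (0:ℝ) < |(z:ℝ)| := by
      rw [abs_pos]
      exact_mod_cast hz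
    rw [transP, if_neg hz]
    rw [show |(z:ℝ)|^θ * (cγ * |(z:ℝ)|^(-(1+γ))) = cγ * (|(z:ℝ)|^θ * |(z:ℝ)|^(-(1+γ))) by ring,
      ← Real.rpow_add hz0, add_zero]
    rw [show θ + -(1+γ) = -(1+γ-θ) by ring, Real.rpow_neg hz0.le, one_div]

lemma indicator_tsum {N n : ℕ} (hN : 1 ≤ N) (hn : 1 ≤ n) :
    Summable (fun x : ℤ => if |(x:ℝ)| ≤ (N:ℝ) * n then (1:ℝ) else 0) ∧
    (∑' x : ℤ, (if |(x:ℝ)| ≤ (N:ℝ) * n then (1:ℝ) else 0)) ≤ 3 * N * n := by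
  set f : ℤ → ℝ := fun x => if |(x:ℝ)| ≤ (N:ℝ) * n then (1:ℝ) else 0 with hf
  set s0 : Finset ℤ := Finset.Icc (-(N*n : ℤ)) ((N*n : ℤ)) with hs0
  have hout : ∀ x ∉ s0, f x = 0 := by
    intro x hx
    rw [hf]
    rw [hs0, Finset.mem_Icc] at hx
    push_neg at hx
    have : ¬ |(x:ℝ)| ≤ (N:ℝ) * n := by
      intro habs
      rw [abs_le] at habs
      have h1 : -((N*n : ℤ):ℝ) ≤ (x:ℝ) := by push_cast; push_cast at habs; linarith [habs.1]
      have h2 : (x:ℝ) ≤ ((N*n : ℤ):ℝ) := by push_cast; push_cast at habs; linarith [habs.2]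
      have h1' : -(N*n : ℤ) ≤ x := by exact_mod_cast h1
      have h2' : x ≤ (N*n : ℤ) := by exact_mod_cast h2
      exact absurd h2' (not_le.mpr (hx h1'))
    simp [this]
  refine ⟨summable_of_ne_finset_zero hout, ?_⟩
  rw [tsum_eq_sum hout]
  have hcard : (s0.card : ℝ) = 2 * N * n + 1 := by
    rw [hs0, Int.card_Icc]
    have : ((N*n:ℤ) + 1 - (-(N*n:ℤ))) = 2*(N*n:ℤ) + 1 := by ring
    rw [this]
    have h2 : (0:ℤ) ≤ 2*(N*n:ℤ) + 1 := by positivity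
    rw [show ((2*((N:ℤ)*(n:ℤ)) + 1).toNat : ℝ) = (((2*((N:ℤ)*(n:ℤ)) + 1).toNat : ℤ) : ℝ) from
      (Int.cast_natCast _).symm, Int.toNat_of_nonneg h2]
    push_cast
    ring
  calc ∑ x ∈ s0, f x ≤ ∑ x ∈ s0, 1 := Finset.sum_le_sum (fun x _ => by
        simp only [hf]; split_ifs <;> norm_num)
    _ = (s0.card : ℝ) := by simp
    _ = 2 * N * n + 1 := hcard
    _ ≤ 3 * N * n := by
        have h1 : (1:ℝ) ≤ (N:ℝ) := by exact_mod_cast hN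
        have h2 : (1:ℝ) ≤ (n:ℝ) := by exact_mod_cast hn
        nlinarith

lemma test_bounds {G : ℝ → ℝ → ℝ} (hG : IsTestFun G) {T : ℝ} (hT : 0 < T) :
    ∃ L M : ℝ, ∃ N : ℕ, 0 ≤ L ∧ 0 ≤ M ∧ 1 ≤ N ∧
      ∀ n : ℕ, 1 ≤ n → ∀ s ∈ Set.Icc (0:ℝ) T, ∀ x y : ℤ,
        |gradn n (G s) x| ≤ L ∧
        |gradn n (G s) y - gradn n (G s) x| ≤ M * |(y : ℝ) - (x : ℝ)| / n ∧
        (gradn n (G s) x ≠ 0 → |(x : ℝ)| ≤ (N : ℝ) * n) := by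
  obtain ⟨k, Gj, hsm, hrep⟩ := hG
  choose Lj Mj Nj hLj hMj hNj hprop using fun j => single_bounds (hsm j).1 (hsm j).2
  set c : ℝ := max 1 T with hc
  have hc1 : (1:ℝ) ≤ c := le_max_left _ _
  set L : ℝ := ∑ j ∈ Finset.range (k+1), c ^ j * Lj j with hLdef
  set M : ℝ := ∑ j ∈ Finset.range (k+1), c ^ j * Mj j with hMdef
  set N : ℕ := max 1 ((Finset.range (k+1)).sup Nj) with hNdef
  have hL0 : 0 ≤ L := Finset.sum_nonneg fun j _ => mul_nonneg (pow_nonneg (by linarith) _) (hLj j)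
  have hM0 : 0 ≤ M := Finset.sum_nonneg fun j _ => mul_nonneg (pow_nonneg (by linarith) _) (hMj j)
  refine ⟨L, M, N, hL0, hM0, le_max_left _ _, ?_⟩
  intro n hn s hs x y
  have hkey : ∀ z : ℤ, gradn n (G s) z = ∑ j ∈ Finset.range (k+1), s ^ j * gradn n (Gj j) z := by
    intro z
    simp only [gradn, hrep, ← Finset.sum_sub_distrib, Finset.mul_sum]
    refine Finset.sum_congr rfl fun j _ => by ring
  have hsc : ∀ j : ℕ, |s ^ j| ≤ c ^ j := by
    intro j
    rw [abs_pow]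
    refine pow_le_pow_left₀ (abs_nonneg _) ?_ _
    rw [abs_of_nonneg hs.1]
    exact hs.2.trans (le_max_right _ _)
  refine ⟨?_, ?_, ?_⟩
  · rw [hkey]
    calc |∑ j ∈ Finset.range (k+1), s ^ j * gradn n (Gj j) x|
        ≤ ∑ j ∈ Finset.range (k+1), |s ^ j * gradn n (Gj j) x| := Finset.abs_sum_le_sum_abs _ _
      _ ≤ ∑ j ∈ Finset.range (k+1), c ^ j * Lj j := by
          refine Finset.sum_le_sum fun j _ => ?_
          rw [abs_mul]
          exact mul_le_mul (hsc j) ((hprop j n hn x y).1) (abs_nonneg _)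
            (pow_nonneg (by linarith) _)
  · rw [hkey, hkey, ← Finset.sum_sub_distrib]
    calc |∑ j ∈ Finset.range (k+1), (s ^ j * gradn n (Gj j) y - s ^ j * gradn n (Gj j) x)|
        ≤ ∑ j ∈ Finset.range (k+1), |s ^ j * gradn n (Gj j) y - s ^ j * gradn n (Gj j) x| :=
          Finset.abs_sum_le_sum_abs _ _
      _ ≤ ∑ j ∈ Finset.range (k+1), c ^ j * (Mj j * |(y : ℝ) - (x : ℝ)| / n) := by
          refine Finset.sum_le_sum fun j _ => ?_
          rw [← mul_sub, abs_mul]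
          exact mul_le_mul (hsc j) ((hprop j n hn x y).2.1) (abs_nonneg _)
            (pow_nonneg (by linarith) _)
      _ = M * |(y : ℝ) - (x : ℝ)| / n := by
          rw [hMdef, Finset.sum_mul, Finset.sum_div]
          refine Finset.sum_congr rfl fun j _ => by ring
  · intro hne
    rw [hkey] at hne
    obtain ⟨j, hj, hjne⟩ : ∃ j ∈ Finset.range (k+1), s ^ j * gradn n (Gj j) x ≠ 0 := by
      by_contra hcon
      push_neg at hcon
      exact hne (Finset.sum_eq_zero hcon)
    have : gradn n (Gj j) x ≠ 0 := fun h => hjne (by rw [h, mul_zero])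
    have hb := (hprop j n hn x x).2.2 this
    calc |(x:ℝ)| ≤ (Nj j : ℝ) * n := hb
      _ ≤ (N : ℝ) * n := by
          have : Nj j ≤ N := le_trans (Finset.le_sup hj) (le_max_right _ _)
          have hn0 : (0:ℝ) ≤ n := Nat.cast_nonneg n
          exact mul_le_mul_of_nonneg_right (by exact_mod_cast this) hn0

theorem stmt2 (γ cγ T : ℝ) (hγ : γ ∈ Set.Ioo (0 : ℝ) 2) (hcγ : 0 < cγ)
    (hnorm : ∑' z : ℤ, transP cγ γ z = 1) (hT : 0 < T)
    (m : ℕ) (hm : 1 ≤ m) (G : ℝ → ℝ → ℝ) (hG : IsTestFun G) :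
    ∃ C : ℝ, 0 < C ∧
      (∀ n : ℕ, 1 ≤ n →
        Y1 cγ γ T m G n ≤
          C * max (max ((n : ℝ) ^ (γ - 2)) ((n : ℝ)⁻¹)) ((n : ℝ) ^ (γ - 1 - deltaGamma γ))) ∧
      Tendsto (fun n : ℕ => Y1 cγ γ T m G n) atTop (nhds 0) := by
  obtain ⟨hγ0, hγ2⟩ := hγ
  set θ : ℝ := deltaGamma γ with hθdef
  have hθfacts : 0 ≤ θ ∧ θ ≤ 1 ∧ θ < γ ∧ γ - 1 - θ < 0 := by
    rw [hθdef]; unfold deltaGamma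
    split_ifs with h1 h2
    · subst h1; norm_num
    · exact ⟨by norm_num, le_refl 1, h2, by linarith⟩
    · have hlt : γ < 1 := lt_of_le_of_ne (not_lt.mp h2) h1
      exact ⟨le_refl 0, by norm_num, hγ0, by linarith⟩
  obtain ⟨hθ0, hθ1, hθγ, hexp⟩ := hθfacts
  obtain ⟨L, M, N, hL0, hM0, hN1, hbnd⟩ := test_bounds hG hT
  have hh0 : ∀ z : ℤ, 0 ≤ |(z:ℝ)| ^ θ * transP cγ γ z :=
    fun z => mul_nonneg (Real.rpow_nonneg (abs_nonneg _) _) (transP_nonneg hcγ z)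
  have hhsum : Summable (fun z : ℤ => |(z:ℝ)| ^ θ * transP cγ γ z) := summable_h hcγ hθ0 hθγ
  set P : ℝ := ∑' z : ℤ, |(z:ℝ)| ^ θ * transP cγ γ z with hPdef
  have hP0 : 0 ≤ P := tsum_nonneg hh0
  set Cb : ℝ := ((m:ℝ) - 1) * (6 * N * ((2*L) ^ (1-θ) * M ^ θ) * P) with hCbdef
  have hm1 : (0:ℝ) ≤ (m:ℝ) - 1 := by
    have : (1:ℝ) ≤ (m:ℝ) := by exact_mod_cast hm
    linarith
  have hCb0 : 0 ≤ Cb := by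
    apply mul_nonneg hm1
    have h2L : (0:ℝ) ≤ 2*L := by linarith
    positivity
  -- main estimate
  have hmain : ∀ n : ℕ, 1 ≤ n → Y1 cγ γ T m G n ≤ Cb * (n:ℝ) ^ (γ - 1 - θ) := by
    intro n hn
    have hn0 : (0:ℝ) < n := by exact_mod_cast hn
    set ind : ℤ → ℝ := fun x => if |(x:ℝ)| ≤ (N:ℝ) * n then (1:ℝ) else 0 with hinddef
    have hind0 : ∀ x, 0 ≤ ind x := by
      intro x; rw [hinddef]; dsimp only; split_ifs <;> norm_num
    set Ka : ℝ := (n:ℝ) ^ γ * ((2*L) ^ (1-θ) * (M/(n:ℝ)) ^ θ) with hKadef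
    have hKa0 : 0 ≤ Ka := by
      have h2L : (0:ℝ) ≤ 2*L := by linarith
      have hMn : (0:ℝ) ≤ M/(n:ℝ) := div_nonneg hM0 hn0.le
      positivity
    set Q : ℤ → ℝ := fun z => Ka * (|(z:ℝ)| ^ θ * transP cγ γ z) with hQdef
    have hQ0 : ∀ z, 0 ≤ Q z := fun z => mul_nonneg hKa0 (hh0 z)
    have hQsum : Summable Q := hhsum.mul_left Ka
    have hQts : ∑' z, Q z = Ka * P := by rw [hQdef, hPdef]; exact hhsum.tsum_mul_left Ka
    obtain ⟨hindsum, hindts⟩ := indicator_tsum hN1 hn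
    rw [← hinddef] at hindsum hindts
    set Sind : ℝ := ∑' x : ℤ, ind x with hSinddef
    have hSind0 : 0 ≤ Sind := tsum_nonneg hind0
    -- the dominating function
    set g : ℤ × ℤ → ℝ := fun p => ind p.1 * Q (p.2 - p.1) + ind p.2 * Q (p.2 - p.1) with hgdef
    have hg0 : ∀ p, 0 ≤ g p := fun p =>
      add_nonneg (mul_nonneg (hind0 _) (hQ0 _)) (mul_nonneg (hind0 _) (hQ0 _))
    set F : ℤ × ℤ → ℝ := fun p =>
      ⨆ s : Set.Icc (0:ℝ) T,
        (n:ℝ) ^ γ * |gradn n (G (s:ℝ)) p.2 - gradn n (G (s:ℝ)) p.1| * transP cγ γ (p.2 - p.1)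
      with hFdef
    have hF0 : ∀ p, 0 ≤ F p := fun p =>
      Real.iSup_nonneg fun s => mul_nonneg
        (mul_nonneg (Real.rpow_nonneg hn0.le _) (abs_nonneg _)) (transP_nonneg hcγ _)
    -- pointwise bound F ≤ g
    have hFg : ∀ p, F p ≤ g p := by
      rintro ⟨x, y⟩
      refine Real.iSup_le ?_ (hg0 _)
      rintro ⟨s, hs⟩
      simp only
      by_cases hΔ : gradn n (G s) y - gradn n (G s) x = 0
      · rw [hΔ]; simpa using hg0 (x, y)
      · have hb := hbnd n hn s hs
        have habs2L : |gradn n (G s) y - gradn n (G s) x| ≤ 2*L := by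
          have h1 := (hb x y).1
          have h2 := (hb y x).1
          calc |gradn n (G s) y - gradn n (G s) x|
              ≤ |gradn n (G s) y| + |gradn n (G s) x| := abs_sub _ _
            _ ≤ 2*L := by linarith
        have habsM := (hb x y).2.1
        have hinterp : |gradn n (G s) y - gradn n (G s) x| ≤
            (2*L) ^ (1-θ) * ((M/(n:ℝ)) ^ θ * |(y:ℝ) - (x:ℝ)| ^ θ) := by
          have := interp_min (abs_nonneg _) habs2L habsM hθ0 hθ1
          calc |gradn n (G s) y - gradn n (G s) x|
              ≤ (2*L) ^ (1-θ) * (M * |(y:ℝ) - (x:ℝ)| / n) ^ θ := this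
            _ = (2*L) ^ (1-θ) * ((M/(n:ℝ)) ^ θ * |(y:ℝ) - (x:ℝ)| ^ θ) := by
                rw [show M * |(y:ℝ) - (x:ℝ)| / n = (M/(n:ℝ)) * |(y:ℝ) - (x:ℝ)| by ring,
                  Real.mul_rpow (div_nonneg hM0 hn0.le) (abs_nonneg _)]
        have hone : 1 ≤ ind x + ind y := by
          have hxy : gradn n (G s) x ≠ 0 ∨ gradn n (G s) y ≠ 0 := by
            by_contra hcon
            push_neg at hcon
            exact hΔ (by rw [hcon.1, hcon.2, sub_zero])
          rcases hxy with hne | hne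
          · have := (hb x y).2.2 hne
            have hix : ind x = 1 := by rw [hinddef]; exact if_pos this
            have := hind0 y
            linarith
          · have := (hb y x).2.2 hne
            have hiy : ind y = 1 := by rw [hinddef]; exact if_pos this
            have := hind0 x
            linarith
        have hcast : |(y:ℝ) - (x:ℝ)| = |((y - x : ℤ) : ℝ)| := by push_cast; ring_nf
        have step1 : (n:ℝ) ^ γ * |gradn n (G s) y - gradn n (G s) x| * transP cγ γ (y - x)
            ≤ Ka * (|((y - x : ℤ):ℝ)| ^ θ * transP cγ γ (y - x)) := by
          rw [hKadef]
          have h2 := mul_le_mul_of_nonneg_left hinterp (Real.rpow_nonneg hn0.le γ)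
          have h3 : (n:ℝ) ^ γ * |gradn n (G s) y - gradn n (G s) x| * transP cγ γ (y - x) ≤
              (n:ℝ) ^ γ * ((2*L) ^ (1-θ) * ((M/(n:ℝ)) ^ θ * |(y:ℝ) - (x:ℝ)| ^ θ)) *
                transP cγ γ (y - x) :=
            mul_le_mul_of_nonneg_right h2 (transP_nonneg hcγ (y - x))
          calc (n:ℝ) ^ γ * |gradn n (G s) y - gradn n (G s) x| * transP cγ γ (y - x)
              ≤ (n:ℝ) ^ γ * ((2*L) ^ (1-θ) * ((M/(n:ℝ)) ^ θ * |(y:ℝ) - (x:ℝ)| ^ θ)) *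
                transP cγ γ (y - x) := h3
            _ = (n:ℝ) ^ γ * ((2*L) ^ (1-θ) * (M/(n:ℝ)) ^ θ) *
                (|((y - x : ℤ):ℝ)| ^ θ * transP cγ γ (y - x)) := by rw [← hcast]; ring
        calc (n:ℝ) ^ γ * |gradn n (G s) y - gradn n (G s) x| * transP cγ γ (y - x)
            ≤ Q (y - x) := step1
          _ ≤ (ind x + ind y) * Q (y - x) := le_mul_of_one_le_left (hQ0 _) hone
          _ = g (x, y) := by rw [hgdef]; ring
    -- summability and tsum of g
    have habs : ∀ (f : ℤ → ℝ), (∀ x, 0 ≤ f x) → Summable f → Summable (fun x => ‖f x‖) := by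
      intro f hf hsf
      refine hsf.congr fun x => ?_
      rw [Real.norm_eq_abs, abs_of_nonneg (hf x)]
    have hprod : Summable (fun p : ℤ × ℤ => ind p.1 * Q p.2) :=
      Summable.mul_of_nonneg hindsum hQsum hind0 hQ0
    have hprodts : ∑' p : ℤ × ℤ, ind p.1 * Q p.2 = Sind * (Ka * P) := by
      rw [← hQts, hSinddef]
      exact (tsum_mul_tsum_of_summable_norm (habs _ hind0 hindsum) (habs _ hQ0 hQsum)).symm
    set e1 : ℤ × ℤ ≃ ℤ × ℤ := Equiv.prodShear (Equiv.refl ℤ) (fun x => Equiv.addLeft x) with he1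
    set g1 : ℤ × ℤ → ℝ := fun p => ind p.1 * Q (p.2 - p.1) with hg1def
    have he1eq : (fun p : ℤ × ℤ => g1 (e1 p)) = fun p : ℤ × ℤ => ind p.1 * Q p.2 := by
      funext p
      simp [hg1def, he1, Equiv.prodShear, add_sub_cancel_left]
    have hg1sum : Summable g1 :=
      (Equiv.summable_iff e1).mp (hprod.congr fun p => (congrFun he1eq p).symm)
    have hg1ts : ∑' p, g1 p = Sind * (Ka * P) := by
      rw [← Equiv.tsum_eq e1 g1, tsum_congr (fun p => congrFun he1eq p)]
      exact hprodts
    set e2 : ℤ × ℤ ≃ ℤ × ℤ :=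
      (Equiv.prodShear (Equiv.refl ℤ) (fun y => (Equiv.neg ℤ).trans (Equiv.addLeft y))).trans
        (Equiv.prodComm ℤ ℤ) with he2
    set g2 : ℤ × ℤ → ℝ := fun p => ind p.2 * Q (p.2 - p.1) with hg2def
    have he2eq : (fun p : ℤ × ℤ => g2 (e2 p)) = fun p : ℤ × ℤ => ind p.1 * Q p.2 := by
      funext p
      show ind p.1 * Q (p.1 - (p.1 + -p.2)) = ind p.1 * Q p.2
      rw [show p.1 - (p.1 + -p.2) = p.2 by ring]
    have hg2sum : Summable g2 :=
      (Equiv.summable_iff e2).mp (hprod.congr fun p => (congrFun he2eq p).symm)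
    have hg2ts : ∑' p, g2 p = Sind * (Ka * P) := by
      rw [← Equiv.tsum_eq e2 g2, tsum_congr (fun p => congrFun he2eq p)]
      exact hprodts
    have hgsum : Summable g := by
      have : g = fun p => g1 p + g2 p := by funext p; rw [hgdef, hg1def, hg2def]
      rw [this]
      exact hg1sum.add hg2sum
    have hgts : ∑' p, g p = Sind * (Ka * P) + Sind * (Ka * P) := by
      have : g = fun p => g1 p + g2 p := by funext p; rw [hgdef, hg1def, hg2def]
      rw [this, Summable.tsum_add hg1sum hg2sum, hg1ts, hg2ts]
    -- conclude
    have hFsum : Summable F := Summable.of_nonneg_of_le hF0 hFg hgsum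
    have hFle : ∑' p, F p ≤ Sind * (Ka * P) + Sind * (Ka * P) := by
      rw [← hgts]
      exact Summable.tsum_le_tsum hFg hFsum hgsum
    have hKaP0 : 0 ≤ Ka * P := mul_nonneg hKa0 hP0
    have hstep : ∑' p, F p ≤ (3*N*n) * (Ka * P) + (3*N*n) * (Ka * P) := by
      have := mul_le_mul_of_nonneg_right hindts hKaP0
      linarith
    have hcoeff : (0:ℝ) ≤ ((m:ℝ) - 1) / (n:ℝ) ^ 2 := div_nonneg hm1 (sq_nonneg _)
    have hY1 : Y1 cγ γ T m G n = (((m:ℝ) - 1) / (n:ℝ) ^ 2) * ∑' p, F p := by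
      rw [Y1, hFdef]
    rw [hY1]
    have hfinal : (((m:ℝ) - 1) / (n:ℝ) ^ 2) * ((3*N*n) * (Ka * P) + (3*N*n) * (Ka * P)) =
        Cb * (n:ℝ) ^ (γ - 1 - θ) := by
      have hpow : (n:ℝ) ^ (γ - 1 - θ) = (n:ℝ) ^ γ * (n:ℝ) / ((n:ℝ) ^ 2 * (n:ℝ) ^ θ) := by
        rw [show γ - 1 - θ = (γ + 1) - (2 + θ) by ring, Real.rpow_sub hn0,
          Real.rpow_add hn0, Real.rpow_add hn0, Real.rpow_one,
          show (2:ℝ) = ((2:ℕ):ℝ) by norm_num, Real.rpow_natCast]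
      rw [hpow, hCbdef, hKadef, Real.div_rpow hM0 hn0.le]
      have hnθ : (n:ℝ) ^ θ ≠ 0 := (Real.rpow_pos_of_pos hn0 θ).ne'
      field_simp
      ring
    calc (((m:ℝ) - 1) / (n:ℝ) ^ 2) * ∑' p, F p
        ≤ (((m:ℝ) - 1) / (n:ℝ) ^ 2) * ((3*N*n) * (Ka * P) + (3*N*n) * (Ka * P)) :=
          mul_le_mul_of_nonneg_left hstep hcoeff
      _ = Cb * (n:ℝ) ^ (γ - 1 - θ) := hfinal
  -- nonnegativity of Y1
  have hY1nonneg : ∀ n : ℕ, 0 ≤ Y1 cγ γ T m G n := by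
    intro n
    apply mul_nonneg (div_nonneg hm1 (sq_nonneg _))
    apply tsum_nonneg
    intro p
    exact Real.iSup_nonneg fun s => mul_nonneg
      (mul_nonneg (Real.rpow_nonneg (Nat.cast_nonneg n) _) (abs_nonneg _)) (transP_nonneg hcγ _)
  refine ⟨Cb + 1, by linarith, ?_, ?_⟩
  · intro n hn
    have hne : (0:ℝ) ≤ (n:ℝ) ^ (γ - 1 - θ) :=
      Real.rpow_nonneg (Nat.cast_nonneg n) _
    calc Y1 cγ γ T m G n ≤ Cb * (n:ℝ) ^ (γ - 1 - θ) := hmain n hn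
      _ ≤ (Cb + 1) * (n:ℝ) ^ (γ - 1 - θ) := by nlinarith
      _ ≤ (Cb + 1) * max (max ((n:ℝ) ^ (γ - 2)) ((n:ℝ)⁻¹)) ((n:ℝ) ^ (γ - 1 - deltaGamma γ)) := by
          apply mul_le_mul_of_nonneg_left _ (by linarith)
          rw [← hθdef]
          exact le_max_right _ _
  · have htend : Tendsto (fun n : ℕ => (Cb + 1) * (n:ℝ) ^ (γ - 1 - θ)) atTop (nhds 0) := by
      have h1 : Tendsto (fun x : ℝ => x ^ (-(1 + θ - γ))) atTop (nhds 0) :=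
        tendsto_rpow_neg_atTop (by linarith)
      have h2 : Tendsto (fun n : ℕ => ((n:ℝ)) ^ (-(1 + θ - γ))) atTop (nhds 0) :=
        h1.comp tendsto_natCast_atTop_atTop
      have h3 : Tendsto (fun n : ℕ => ((n:ℝ)) ^ (γ - 1 - θ)) atTop (nhds 0) := by
        refine h2.congr fun n => ?_
        rw [show -(1 + θ - γ) = γ - 1 - θ by ring]
      simpa using h3.const_mul (Cb + 1)
    apply squeeze_zero' (Eventually.of_forall hY1nonneg) _ htend
    filter_upwards [eventually_ge_atTop 1] with n hn
    calc Y1 cγ γ T m G n ≤ Cb * (n:ℝ) ^ (γ - 1 - θ) := hmain n hn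
      _ ≤ (Cb + 1) * (n:ℝ) ^ (γ - 1 - θ) := by
          nlinarith [Real.rpow_nonneg (Nat.cast_nonneg n) (γ - 1 - θ)]
end

section
/- For every integer m ≥ 2, every η ∈ Ω and all x, y ∈ ℤ, it holds S^{(m)}_{x,y}(η) · (η(y) − η(x)) = B_m(η,y) − B_m(η,x) + ( C_m(η,y,x) − C_m(η,y+1,x+1) ) − ( C_m(η,x,y) − C_m(η,x+1,y+1) ), where B_m(η,z) := ∏_{i=0}^{m−1} η(z−i) + ∏_{i=0}^{m−1} η(z+i) and C_m(η,z,w) := Σ_{k=1}^{m−1} ( ∏_{j=0}^{k−1} η(z+j) ) · ( ∏_{i=1}^{m−k} η(w−i) ). -/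
/-!
Reading the sites `a_{j,x,y}` as the sequence `x-m+1, …, x-1, y+1, …, y+m-1` (and the same with
`x, y` swapped), the rate `S` is a sum over windows of `m-1` consecutive sites of that sequence:
`S = T(x,y) + T(y,x)`, where `T(x,y) = ∑_{k<m} ∏(m-1-k sites left of x) · ∏(k sites right of y)`.
Multiplying the `k`-th term by `η(y)` extends its right block to start at `y`, multiplying by `η(x)`
extends its left block to end at `x`. The two resulting sums agree after the shift `k ↦ k+1` except
for their extreme terms, the full blocks `∏_{i<m} η(y+i)` and `∏_{i<m} η(x-i)`, and the remaining
terms are exactly the `C_m`.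
-/

/-- The sites `a_{j,x,y}` (for `j ∈ {1, …, 4(m-1)}`). -/
def aIdx (m : ℕ) (x y : ℤ) (j : ℕ) : ℤ :=
  if j ≤ m - 1 then x - ((m : ℤ) - (j : ℤ))
  else if j ≤ 2 * (m - 1) then y + (j : ℤ) - ((m : ℤ) - 1)
  else if j ≤ 3 * (m - 1) then y - (3 * (m : ℤ) - 2 - (j : ℤ))
  else x + (j : ℤ) - 3 * ((m : ℤ) - 1)

/-- The symmetrized porous medium rate
`S^{(m)}_{x,y}(η) = c^{(m,dif)}_{x,y}(η) + c^{(m,dif)}_{y,x}(η)`. -/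
noncomputable def Srate (m : ℕ) (x y : ℤ) (η : ℤ → ℝ) : ℝ :=
  ∑ j ∈ Finset.Icc 1 m,
    (∏ i ∈ Finset.range (m - 1), η (aIdx m x y (i + j)) +
      ∏ i ∈ Finset.range (m - 1), η (aIdx m x y (i + j + 2 * (m - 1))))

/-- `B_m(η,z) = ∏_{i=0}^{m-1} η(z-i) + ∏_{i=0}^{m-1} η(z+i)`. -/
noncomputable def Bm (m : ℕ) (η : ℤ → ℝ) (z : ℤ) : ℝ :=
  ∏ i ∈ Finset.range m, η (z - (i : ℤ)) + ∏ i ∈ Finset.range m, η (z + (i : ℤ))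

/-- `C_m(η,z,w) = ∑_{k=1}^{m-1} (∏_{j=0}^{k-1} η(z+j)) (∏_{i=1}^{m-k} η(w-i))`. -/
noncomputable def Cm (m : ℕ) (η : ℤ → ℝ) (z w : ℤ) : ℝ :=
  ∑ k ∈ Finset.Icc 1 (m - 1),
    (∏ j ∈ Finset.range k, η (z + (j : ℤ))) * ∏ i ∈ Finset.Icc 1 (m - k), η (w - (i : ℤ))

open Finset

@[to_additive sum_Icc_one_eq_sum_range]
theorem prod_Icc_one_eq_prod_range {M : Type*} [CommMonoid M] (f : ℕ → M) (n : ℕ) :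
    ∏ i ∈ Icc 1 n, f i = ∏ i ∈ range n, f (i + 1) := by
  rw [← Ico_add_one_right_eq_Icc, prod_Ico_eq_prod_range, Nat.add_sub_cancel]
  exact prod_congr rfl fun i _ => by rw [add_comm]

noncomputable def leftBlock (η : ℤ → ℝ) (z : ℤ) (n : ℕ) : ℝ := ∏ i ∈ range n, η (z - i)

noncomputable def rightBlock (η : ℤ → ℝ) (z : ℤ) (n : ℕ) : ℝ := ∏ i ∈ range n, η (z + i)

lemma leftBlock_succ (η : ℤ → ℝ) (z : ℤ) (n : ℕ) :
    leftBlock η z (n + 1) = η z * leftBlock η (z - 1) n := by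
  simp only [leftBlock, prod_range_succ', Nat.cast_add, Nat.cast_one, Nat.cast_zero, sub_zero]
  rw [mul_comm]
  congr 1
  exact prod_congr rfl fun i _ => by ring_nf

lemma rightBlock_succ (η : ℤ → ℝ) (z : ℤ) (n : ℕ) :
    rightBlock η z (n + 1) = η z * rightBlock η (z + 1) n := by
  simp only [rightBlock, prod_range_succ', Nat.cast_add, Nat.cast_one, Nat.cast_zero, add_zero]
  rw [mul_comm]
  congr 1
  exact prod_congr rfl fun i _ => by ring_nf

lemma Bm_eq_leftBlock_add_rightBlock (m : ℕ) (η : ℤ → ℝ) (z : ℤ) :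
    Bm m η z = leftBlock η z m + rightBlock η z m := rfl

lemma Cm_eq_sum_range (m : ℕ) (η : ℤ → ℝ) (z w : ℤ) :
    Cm m η z w = ∑ k ∈ range (m - 1), rightBlock η z (k + 1) * leftBlock η (w - 1) (m - 1 - k) := by
  rw [Cm, sum_Icc_one_eq_sum_range]
  refine sum_congr rfl fun k _ => ?_
  rw [prod_Icc_one_eq_prod_range, Nat.sub_sub, add_comm 1 k]
  exact congrArg _ (prod_congr rfl fun i _ => by push_cast; ring_nf)

lemma aIdx_add_two_mul (m : ℕ) (x y : ℤ) {k : ℕ} (hk₁ : 1 ≤ k) (hk₂ : k ≤ 2 * (m - 1)) :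
    aIdx m x y (k + 2 * (m - 1)) = aIdx m y x k := by
  unfold aIdx
  split_ifs <;> omega

lemma prod_aIdx_window (m : ℕ) (η : ℤ → ℝ) (x y : ℤ) {j : ℕ} (hj₁ : 1 ≤ j) (hj₂ : j ≤ m) :
    ∏ i ∈ range (m - 1), η (aIdx m x y (i + j)) =
      leftBlock η (x - 1) (m - j) * rightBlock η (y + 1) (j - 1) := by
  rw [show m - 1 = (m - j) + (j - 1) by omega, prod_range_add, leftBlock, ← prod_range_reflect]
  congr 1 <;> refine prod_congr rfl fun i hi => congrArg η ?_ <;> rw [mem_range] at hi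
  · rw [aIdx, if_pos (by omega)]
    omega
  · rw [aIdx, if_neg (by omega), if_pos (by omega)]
    omega

noncomputable def windowSum (η : ℤ → ℝ) (x y : ℤ) (m : ℕ) : ℝ :=
  ∑ k ∈ range m, leftBlock η (x - 1) (m - 1 - k) * rightBlock η (y + 1) k

lemma Srate_eq_windowSum_add_windowSum (m : ℕ) (x y : ℤ) (η : ℤ → ℝ) :
    Srate m x y η = windowSum η x y m + windowSum η y x m := by
  have hwindows : ∀ j ∈ Icc 1 m,
      ∏ i ∈ range (m - 1), η (aIdx m x y (i + j)) +
        ∏ i ∈ range (m - 1), η (aIdx m x y (i + j + 2 * (m - 1))) =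
      leftBlock η (x - 1) (m - j) * rightBlock η (y + 1) (j - 1) +
        leftBlock η (y - 1) (m - j) * rightBlock η (x + 1) (j - 1) := by
    intro j hj
    rw [mem_Icc] at hj
    rw [← prod_aIdx_window m η x y hj.1 hj.2, ← prod_aIdx_window m η y x hj.1 hj.2]
    congr 1
    exact prod_congr rfl fun i hi => by
      rw [mem_range] at hi
      rw [aIdx_add_two_mul m x y (by omega) (by omega)]
  rw [Srate, sum_congr rfl hwindows, sum_add_distrib, windowSum, windowSum,
    sum_Icc_one_eq_sum_range, sum_Icc_one_eq_sum_range]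
  simp only [Nat.add_sub_cancel, Nat.sub_sub, add_comm 1]

lemma windowSum_mul_sub (m : ℕ) (η : ℤ → ℝ) (x y : ℤ) :
    windowSum η x y m * (η y - η x) =
      rightBlock η y m + Cm m η y x - (leftBlock η x m + Cm m η (y + 1) (x + 1)) := by
  obtain _ | n := m
  · simp [windowSum, leftBlock, rightBlock, Cm]
  have hsplit : windowSum η x y (n + 1) * (η y - η x) =
      ∑ k ∈ range (n + 1), leftBlock η (x - 1) (n - k) * rightBlock η y (k + 1) -
        ∑ k ∈ range (n + 1), leftBlock η x (n - k + 1) * rightBlock η (y + 1) k := by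
    rw [windowSum, sum_mul, ← sum_sub_distrib]
    refine sum_congr rfl fun k _ => ?_
    rw [rightBlock_succ, leftBlock_succ, Nat.add_sub_cancel]
    ring
  have hgrow_right : ∑ k ∈ range (n + 1), leftBlock η (x - 1) (n - k) * rightBlock η y (k + 1) =
      Cm (n + 1) η y x + rightBlock η y (n + 1) := by
    rw [sum_range_succ, Cm_eq_sum_range, Nat.sub_self, Nat.add_sub_cancel, leftBlock,
      prod_range_zero, one_mul]
    exact congrArg (· + _) (sum_congr rfl fun k _ => mul_comm _ _)
  have hgrow_left : ∑ k ∈ range (n + 1), leftBlock η x (n - k + 1) * rightBlock η (y + 1) k =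
      Cm (n + 1) η (y + 1) (x + 1) + leftBlock η x (n + 1) := by
    rw [sum_range_succ', Cm_eq_sum_range, Nat.add_sub_cancel, add_sub_cancel_right, rightBlock,
      prod_range_zero, mul_one, Nat.sub_zero]
    refine congrArg (· + _) (sum_congr rfl fun k hk => ?_)
    rw [mem_range] at hk
    rw [mul_comm, show n - (k + 1) + 1 = n - k by omega]
  rw [hsplit, hgrow_right, hgrow_left]
  ring

theorem stmt6_general (m : ℕ) (η : ℤ → ℝ) (x y : ℤ) :
    Srate m x y η * (η y - η x) =
      Bm m η y - Bm m η x + (Cm m η y x - Cm m η (y + 1) (x + 1)) -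
        (Cm m η x y - Cm m η (x + 1) (y + 1)) := by
  have hxy := windowSum_mul_sub m η x y
  have hyx := windowSum_mul_sub m η y x
  rw [Srate_eq_windowSum_add_windowSum, Bm_eq_leftBlock_add_rightBlock,
    Bm_eq_leftBlock_add_rightBlock]
  linear_combination hxy - hyx

theorem stmt6 (m : ℕ) (hm : 2 ≤ m) (η : ℤ → ℝ) (hη : ∀ z : ℤ, η z = 0 ∨ η z = 1)
    (x y : ℤ) :
    Srate m x y η * (η y - η x) =
      Bm m η y - Bm m η x + (Cm m η y x - Cm m η (y + 1) (x + 1)) -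
        (Cm m η x y - Cm m η (x + 1) (y + 1)) :=
  stmt6_general m η x y
end
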